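/- arXiv:1412.7083 — 4 statements merged into one kernel-verified Lean document; each statement's English description precedes it below -/
import Mathlib

section
/- Suppose functions $\tilde h_0, \tilde m_0, \tilde{P}_0, \omega$ on an interval satisfy the equations $\tilde{P}_0' = -\frac{4\pi (E+P) r^2}{r - 2M(r)} \tilde{P}_0 - \frac{(r e^{-\lambda}\tilde m_0) r^2}{(r-2M(r))^2}\left(8\pi P + \frac{1}{r^2}\right) + \frac{r^4 j^2}{12(r - 2M(r))} \omega'^2 + \frac{1}{3}\left(\frac{r^3 j^2 (\omega-\Omega)^2}{r-2M(r)}\right)'$ and $\tilde h_0' - r e^{\lambda} \tilde m_0 (8\pi P + 1/r^2) = 4\pi r e^{\lambda}(E+P)\tilde{P}_0 - \frac{1}{12} e^{\lambda} r^3 j^2 \omega'^2$, where $e^{-\lambda} = 1 - 2M(r)/r$ and $j = e^{-(\lambda+\nu)/2}$ with $\nu$ satisfying $\nu' = \frac{1}{r}(e^{\lambda}-1) + 8\pi r e^{\lambda} P$. Then the quantity $\tilde{P}_0 + \tilde h_0 - \frac{1}{3} r^2 e^{-\nu}(\omega - \Omega)^2$ has vanishing derivative, i.e. it is a first integral (equal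 to a constant $\gamma$). -/
/-!
With `r - 2M = r e^{-λ}` and `j² = e^{-λ} e^{-ν}`, the last term of the `P̃₀` equation is
`(1/3) (r² e^{-ν} (ω - Ω)²)'`, which is exactly the derivative of the correction term of the first
integral, and the remaining source terms of `P̃₀'` are cancelled, after multiplication by `e^{-λ}`,
by those of `h̃₀'`.
-/

open Real Set

lemma sub_two_mul_eq_mul_exp_neg {r M L : ℝ} (hr : r ≠ 0) (hmass : exp (-L) = 1 - 2 * M / r) :
    r - 2 * M = r * exp (-L) := by
  rw [hmass]
  field_simp

lemma exp_neg_add_div_two_sq (a b : ℝ) : exp (-(a + b) / 2) ^ 2 = exp (-a) * exp (-b) := by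
  rw [← exp_add, ← exp_nat_mul]
  ring_nf

lemma frame_dragging_term_eq {s M L ν j w : ℝ} (hs : s ≠ 0) (hmass : exp (-L) = 1 - 2 * M / s)
    (hj : j = exp (-(L + ν) / 2)) :
    s ^ 3 * j ^ 2 * w ^ 2 / (s - 2 * M) = s ^ 2 * exp (-ν) * w ^ 2 := by
  rw [sub_two_mul_eq_mul_exp_neg hs hmass, hj, exp_neg_add_div_two_sq]
  field_simp [exp_ne_zero]

lemma source_terms_cancel {r L E P P0 m0 k w : ℝ} (hr : r ≠ 0) :
    -((4 * π * (E + P) * r ^ 2) / (r * exp (-L))) * P0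
      - ((r * exp (-L) * m0) * r ^ 2 / (r * exp (-L)) ^ 2) * (8 * π * P + 1 / r ^ 2)
      + (r ^ 4 * (exp (-L) * k) / (12 * (r * exp (-L)))) * w ^ 2
      + (r * exp L * m0 * (8 * π * P + 1 / r ^ 2) + 4 * π * r * exp L * (E + P) * P0
        - (1 / 12) * exp L * r ^ 3 * (exp (-L) * k) * w ^ 2) = 0 := by
  rw [exp_neg]
  field_simp [exp_ne_zero]
  ring

lemma deriv_first_integral {P0 h0 ν ω : ℝ → ℝ} {Ω r : ℝ} (hP0 : DifferentiableAt ℝ P0 r)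
    (hh0 : DifferentiableAt ℝ h0 r) (hν : DifferentiableAt ℝ ν r) (hω : DifferentiableAt ℝ ω r) :
    deriv (fun s => P0 s + h0 s - (1/3)*s^2*exp (-(ν s))*(ω s - Ω)^2) r
      = deriv P0 r + deriv h0 r - (1/3) * deriv (fun s => s^2*exp (-(ν s))*(ω s - Ω)^2) r := by
  have hG : DifferentiableAt ℝ (fun s => s^2*exp (-(ν s))*(ω s - Ω)^2) r := by fun_prop
  refine HasDerivAt.deriv ?_
  convert (hP0.hasDerivAt.add hh0.hasDerivAt).sub (hG.hasDerivAt.const_mul (1/3)) using 1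
  funext s
  simp only [Pi.add_apply, Pi.sub_apply]
  ring

theorem first_integral_l0_general
    (I : Set ℝ) (hI : IsOpen I) (hIsub : I ⊆ Ioi (0:ℝ))
    (E P ν lam Mf j ω h0 m0 P0 : ℝ → ℝ) (Ω : ℝ)
    (hνdiff : ∀ r ∈ I, DifferentiableAt ℝ ν r)
    (hωdiff : ∀ r ∈ I, DifferentiableAt ℝ ω r)
    (hh0diff : ∀ r ∈ I, DifferentiableAt ℝ h0 r)
    (hP0diff : ∀ r ∈ I, DifferentiableAt ℝ P0 r)
    (hmass : ∀ r ∈ I, Real.exp (-(lam r)) = 1 - 2*(Mf r)/r)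
    (hj : ∀ r ∈ I, j r = Real.exp (-((lam r) + (ν r))/2))
    (hP0' : ∀ r ∈ I, deriv P0 r =
      -((4*π*(E r + P r)*r^2)/(r - 2*(Mf r)))*(P0 r)
      - ((r*Real.exp (-(lam r))*(m0 r))*r^2/(r - 2*(Mf r))^2)*(8*π*(P r) + 1/r^2)
      + (r^4*(j r)^2/(12*(r - 2*(Mf r))))*(deriv ω r)^2
      + (1/3)*deriv (fun s => s^3*(j s)^2*(ω s - Ω)^2/(s - 2*(Mf s))) r)
    (hh0' : ∀ r ∈ I, deriv h0 r - r*Real.exp (lam r)*(m0 r)*(8*π*(P r) + 1/r^2)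
      = 4*π*r*Real.exp (lam r)*(E r + P r)*(P0 r)
        - (1/12)*Real.exp (lam r)*r^3*(j r)^2*(deriv ω r)^2) :
    ∀ r ∈ I,
      deriv (fun s => P0 s + h0 s - (1/3)*s^2*Real.exp (-(ν s))*(ω s - Ω)^2) r = 0 := by
  intro r hr
  have hr0 : r ≠ 0 := (hIsub hr).ne'
  have hframe : deriv (fun s => s^3*(j s)^2*(ω s - Ω)^2/(s - 2*(Mf s))) r
      = deriv (fun s => s^2*exp (-(ν s))*(ω s - Ω)^2) r := by
    refine Filter.EventuallyEq.deriv_eq ?_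
    filter_upwards [hI.mem_nhds hr] with s hs
    exact frame_dragging_term_eq (hIsub hs).ne' (hmass s hs) (hj s hs)
  have hh0r := hh0' r hr
  rw [deriv_first_integral (hP0diff r hr) (hh0diff r hr) (hνdiff r hr) (hωdiff r hr), hP0' r hr,
    hframe, sub_two_mul_eq_mul_exp_neg hr0 (hmass r hr)]
  rw [hj r hr, exp_neg_add_div_two_sq] at hh0r ⊢
  linear_combination hh0r + source_terms_cancel (L := lam r) (E := E r) (P := P r) (P0 := P0 r)
    (m0 := m0 r) (k := exp (-(ν r))) (w := deriv ω r) hr0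

theorem first_integral_l0
    (I : Set ℝ) (hI : IsOpen I) (hIsub : I ⊆ Ioi (0:ℝ))
    (E P ν lam Mf j ω h0 m0 P0 : ℝ → ℝ) (Ω : ℝ)
    (hEdiff : ∀ r ∈ I, DifferentiableAt ℝ E r)
    (hPdiff : ∀ r ∈ I, DifferentiableAt ℝ P r)
    (hνdiff : ∀ r ∈ I, DifferentiableAt ℝ ν r)
    (hlamdiff : ∀ r ∈ I, DifferentiableAt ℝ lam r)
    (hMdiff : ∀ r ∈ I, DifferentiableAt ℝ Mf r)
    (hjdiff : ∀ r ∈ I, DifferentiableAt ℝ j r)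
    (hωdiff : ∀ r ∈ I, DifferentiableAt ℝ ω r)
    (hω'diff : ∀ r ∈ I, DifferentiableAt ℝ (deriv ω) r)
    (hh0diff : ∀ r ∈ I, DifferentiableAt ℝ h0 r)
    (hm0diff : ∀ r ∈ I, DifferentiableAt ℝ m0 r)
    (hP0diff : ∀ r ∈ I, DifferentiableAt ℝ P0 r)
    (hmass : ∀ r ∈ I, Real.exp (-(lam r)) = 1 - 2*(Mf r)/r)
    (hhoriz : ∀ r ∈ I, r - 2*(Mf r) ≠ 0)
    (hj : ∀ r ∈ I, j r = Real.exp (-((lam r) + (ν r))/2))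
    (hlam' : ∀ r ∈ I, deriv lam r = (1/r)*(1 - Real.exp (lam r)) + 8*π*r*Real.exp (lam r)*(E r))
    (hν' : ∀ r ∈ I, deriv ν r = (1/r)*(Real.exp (lam r) - 1) + 8*π*r*Real.exp (lam r)*(P r))
    (hP0' : ∀ r ∈ I, deriv P0 r =
      -((4*π*(E r + P r)*r^2)/(r - 2*(Mf r)))*(P0 r)
      - ((r*Real.exp (-(lam r))*(m0 r))*r^2/(r - 2*(Mf r))^2)*(8*π*(P r) + 1/r^2)
      + (r^4*(j r)^2/(12*(r - 2*(Mf r))))*(deriv ω r)^2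
      + (1/3)*deriv (fun s => s^3*(j s)^2*(ω s - Ω)^2/(s - 2*(Mf s))) r)
    (hh0' : ∀ r ∈ I, deriv h0 r - r*Real.exp (lam r)*(m0 r)*(8*π*(P r) + 1/r^2)
      = 4*π*r*Real.exp (lam r)*(E r + P r)*(P0 r)
        - (1/12)*Real.exp (lam r)*r^3*(j r)^2*(deriv ω r)^2) :
    ∀ r ∈ I,
      deriv (fun s => P0 s + h0 s - (1/3)*s^2*Real.exp (-(ν s))*(ω s - Ω)^2) r = 0 :=
  first_integral_l0_general I hI hIsub E P ν lam Mf j ω h0 m0 P0 Ω hνdiff hωdiff hh0diff hP0diff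
    hmass hj hP0' hh0'
end

section
/- The function $\tilde h_2^-(r) = \frac{J^2}{r^3}\left(\frac{1}{M} + \frac{1}{r}\right)$ together with $\tilde k_2^-(r) = -\frac{J^2}{r^4} - \tilde h_2^-(r)$ satisfies the vacuum $l=2$ equation $\tilde h_2' + \tilde k_2' = -\nu' \tilde h_2 + \left(\frac{1}{r} + \frac{\nu'}{2}\right) \cdot \frac{1}{6} r^4 \omega'^2$, where $\omega(r) = 2J/r^3$ and $\nu(r) = \log(1 - 2M/r)$. -/
/-!
Near `r` we have `h2 + k2 = -J²/r⁴`, so the left side is `4J²/r⁵` without ever computing `h2'`.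
With `ν' = 2M/(r(r - 2M))` and `ω' = -6J/r⁴` the right side is
`J²/(r⁵(r - 2M)) · (-2(r + M) + 6(r - M)) = 4J²/r⁵`.
-/

open Real Filter Topology

theorem hasDerivAt_const_div_pow {𝕜 : Type*} [NontriviallyNormedField 𝕜] (c : 𝕜) (n : ℕ)
    {x : 𝕜} (hx : x ≠ 0) :
    HasDerivAt (fun y => c / y ^ n) (-(n * c) / x ^ (n + 1)) x := by
  rcases n with _ | n
  · simpa using hasDerivAt_const x c
  have h := ((hasDerivAt_pow (n + 1) x).fun_inv (pow_ne_zero _ hx)).const_mul c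
  simp only [div_eq_mul_inv] at h ⊢
  refine h.congr_deriv ?_
  rw [Nat.add_sub_cancel]
  field_simp
  ring

theorem hasDerivAt_log_one_sub_div (a : ℝ) {x : ℝ} (hx : x ≠ 0) (hxa : x ≠ a) :
    HasDerivAt (fun y => Real.log (1 - a / y)) (a / (x * (x - a))) x := by
  have hpos : 1 - a / x ≠ 0 := by
    rw [one_sub_div hx]
    exact div_ne_zero (sub_ne_zero.mpr hxa) hx
  have h := (((hasDerivAt_id x).fun_inv hx).const_mul a).const_sub 1 |>.log hpos
  simp only [id, ← div_eq_mul_inv] at h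
  refine h.congr_deriv ?_
  field_simp

theorem vacuum_l2_equation
    (M J : ℝ) (hM : 0 < M)
    (ν ω h2 k2 : ℝ → ℝ)
    (hν : ∀ r > 2*M, ν r = Real.log (1 - 2*M/r))
    (hω : ∀ r > 2*M, ω r = 2*J/r^3)
    (hh2 : ∀ r > 2*M, h2 r = (J^2/r^3)*(1/M + 1/r))
    (hk2 : ∀ r > 2*M, k2 r = -J^2/r^4 - h2 r) :
    ∀ r > 2*M,
      deriv h2 r + deriv k2 r
        = -(deriv ν r)*(h2 r) + (1/r + (deriv ν r)/2)*((1/6)*r^4*(deriv ω r)^2) := by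
  intro r hr
  have hr0 : r ≠ 0 := by linarith
  have hr2M : r - 2 * M ≠ 0 := by linarith
  have hnear : ∀ᶠ x in 𝓝 r, 2 * M < x := eventually_gt_nhds hr
  have hν' := ((hasDerivAt_log_one_sub_div (2 * M) hr0 (by linarith)).congr_of_eventuallyEq
    (hnear.mono hν)).deriv
  have hω' := ((hasDerivAt_const_div_pow (2 * J) 3 hr0).congr_of_eventuallyEq
    (hnear.mono hω)).deriv
  have hh2_diff : DifferentiableAt ℝ h2 r := by
    refine DifferentiableAt.congr_of_eventuallyEq ?_ (hnear.mono hh2)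
    fun_prop (disch := simp [hr0])
  have hk2' := (((hasDerivAt_const_div_pow (-J ^ 2) 4 hr0).sub
    hh2_diff.hasDerivAt).congr_of_eventuallyEq (hnear.mono hk2)).deriv
  rw [hk2', hν', hω', hh2 r hr]
  field_simp
  ring
end

section
/- The quantities $\tilde h := h - \frac{1}{2} r \nu' k$ and $\tilde m := m - e^{-\lambda/2}(e^{\lambda/2} r k)'$ are invariant under the 'radial' gauge transformation $h \mapsto h + \frac{\nu'}{2} S$, $m \mapsto m + e^{-\lambda/2}(S e^{\lambda/2})'$, $k \mapsto k + S/r$, for any differentiable function $S(r)$. -/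
open Real Set Filter Topology

lemma mul_self_mul_add_div_self_eventuallyEq {f k S : ℝ → ℝ} {r : ℝ} (hr : r ≠ 0) :
    (fun s => f s * s * (k s + S s / s)) =ᶠ[𝓝 r] fun s => f s * s * k s + S s * f s := by
  filter_upwards [isOpen_ne.mem_nhds hr] with s hs
  field_simp

lemma deriv_mul_self_mul_add_div_self {f k S : ℝ → ℝ} {r : ℝ} (hr : r ≠ 0)
    (hf : DifferentiableAt ℝ f r) (hk : DifferentiableAt ℝ k r) (hS : DifferentiableAt ℝ S r) :
    deriv (fun s => f s * s * (k s + S s / s)) r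
      = deriv (fun s => f s * s * k s) r + deriv (fun s => S s * f s) r := by
  rw [(mul_self_mul_add_div_self_eventuallyEq hr).deriv_eq,
    deriv_fun_add ((hf.fun_mul differentiableAt_fun_id).fun_mul hk) (hS.fun_mul hf)]

theorem tilded_quantities_gauge_invariant_general
    (I : Set ℝ) (hIsub : I ⊆ Ioi (0:ℝ))
    (ν lam h m k S : ℝ → ℝ)
    (hSdiff : ∀ r ∈ I, DifferentiableAt ℝ S r)
    (hkdiff : ∀ r ∈ I, DifferentiableAt ℝ k r)
    (hlamdiff : ∀ r ∈ I, DifferentiableAt ℝ lam r) :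
    (∀ r ∈ I,
      (h r + (deriv ν r/2)*S r) - (1/2)*r*(deriv ν r)*(k r + S r/r)
        = h r - (1/2)*r*(deriv ν r)*(k r)) ∧
    (∀ r ∈ I,
      (m r + Real.exp (-(lam r)/2) * deriv (fun s => S s * Real.exp (lam s/2)) r)
        - Real.exp (-(lam r)/2) * deriv (fun s => Real.exp (lam s/2)*s*(k s + S s/s)) r
      = m r - Real.exp (-(lam r)/2) * deriv (fun s => Real.exp (lam s/2)*s*(k s)) r) := by
  refine ⟨fun r hr => ?_, fun r hr => ?_⟩
  · have hr0 : r ≠ 0 := (hIsub hr).ne'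
    field_simp
    ring
  · have hexp : DifferentiableAt ℝ (fun s => Real.exp (lam s / 2)) r :=
      ((hlamdiff r hr).div_const 2).exp
    rw [deriv_mul_self_mul_add_div_self (hIsub hr).ne' hexp (hkdiff r hr) (hSdiff r hr)]
    ring

theorem tilded_quantities_gauge_invariant
    (I : Set ℝ) (hI : IsOpen I) (hIsub : I ⊆ Ioi (0:ℝ))
    (ν lam h m k S : ℝ → ℝ)
    (hSdiff : ∀ r ∈ I, DifferentiableAt ℝ S r)
    (hkdiff : ∀ r ∈ I, DifferentiableAt ℝ k r)
    (hlamdiff : ∀ r ∈ I, DifferentiableAt ℝ lam r) :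
    (∀ r ∈ I,
      (h r + (deriv ν r/2)*S r) - (1/2)*r*(deriv ν r)*(k r + S r/r)
        = h r - (1/2)*r*(deriv ν r)*(k r)) ∧
    (∀ r ∈ I,
      (m r + Real.exp (-(lam r)/2) * deriv (fun s => S s * Real.exp (lam s/2)) r)
        - Real.exp (-(lam r)/2) * deriv (fun s => Real.exp (lam s/2)*s*(k s + S s/s)) r
      = m r - Real.exp (-(lam r)/2) * deriv (fun s => Real.exp (lam s/2)*s*(k s)) r) :=
  tilded_quantities_gauge_invariant_general I hIsub ν lam h m k S hSdiff hkdiff hlamdiff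
end

section
/- Given the matching conditions $[\tilde h_0] = H_0/2$ and $[\tilde h_0'] = \frac{a - M}{a(a - 2M)}[\tilde m_0]$, together with the field equation $\tilde h_0' - r e^{\lambda}\tilde m_0 (8\pi P + 1/r^2) = 4\pi r e^{\lambda}(E+P)\tilde{P}_0 - \frac{1}{12}e^{\lambda} r^3 j^2 \omega'^2$ holding on both sides at $r = a$, with a vacuum exterior ($E_- = P_- = 0$, $\tilde{P}_0^- = 0$, $j_\pm(a) = 1$), $P_+(a) = 0$, $e^{-\lambda(a)} = 1 - 2M/a$, and $[\omega'] = 0$, it follows that $[\tilde m_0] = -4\pi \frac{a^3}{M} E_+(a) \tilde{P}_0^+(a)$. -/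
/-!
Subtracting the exterior field equation from the interior one at `r = a` cancels the rotational
terms and leaves `[h̃₀'] = e^λ [m̃₀] / a + 4π a e^λ E₊ P̃₀⁺`. With `e^λ = a / (a - 2M)`, comparing
with the jump condition turns the coefficient of `[m̃₀]` into `-M / (a (a - 2M))`.
-/

open Real

theorem Real.exp_eq_div_of_exp_neg_eq {l a c : ℝ} (h : exp (-l) = 1 - c / a) (ha : a ≠ 0) :
    exp l = a / (a - c) := by
  rw [← inv_inv (exp l), ← exp_neg, h, one_sub_div ha, inv_div]

theorem m0_jump_formula
    (a M : ℝ) (hM : 0 < M) (ha : 2*M < a)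
    (lamA dh0p dh0m m0p m0m P0p Ep Pp dωp dωm jp jm : ℝ)
    (helam : Real.exp (-(lamA)) = 1 - 2*M/a)
    (hPp : Pp = 0) (hjp : jp = 1) (hjm : jm = 1)
    (hfieldp : dh0p - a*Real.exp lamA*m0p*(8*π*Pp + 1/a^2)
      = 4*π*a*Real.exp lamA*(Ep + Pp)*P0p - (1/12)*Real.exp lamA*a^3*jp^2*dωp^2)
    (hfieldm : dh0m - a*Real.exp lamA*m0m*(8*π*0 + 1/a^2)
      = 4*π*a*Real.exp lamA*(0 + 0)*0 - (1/12)*Real.exp lamA*a^3*jm^2*dωm^2)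
    (hω' : dωp = dωm)
    (hjump : dh0p - dh0m = ((a - M)/(a*(a - 2*M)))*(m0p - m0m)) :
    m0p - m0m = -4*π*(a^3/M)*Ep*P0p := by
  subst hPp hjp hjm hω'
  have ha0 : a ≠ 0 := by linarith
  have hdiff : dh0p - dh0m = exp lamA / a * (m0p - m0m) + 4*π*a*exp lamA*Ep*P0p := by
    field_simp at hfieldp hfieldm ⊢
    linear_combination (hfieldp - hfieldm) / 12
  rw [hjump, exp_eq_div_of_exp_neg_eq helam ha0] at hdiff
  field_simp at hdiff
  rw [div_left_inj' (by linarith)] at hdiff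
  field_simp
  linear_combination -hdiff
end
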